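/- Let Δ_a be the fan in Z^3 with maximal cones Cone(e1,e3,f1,f2) and Cone(e2,e4,f1,f2), where e1=(1,0,0), e2=(0,1,0), e3=(0,0,1), e4=(1,1,-1), f1=(3,1,-2), f2=(-1,1,2). Then neither maximal cone is simplicial, and each maximal cone has exactly four extremal rays, generated respectively by {e1,e3,f1,f2} and {e2,e4,f1,f2}. -/

import Mathlib

/-- The convex cone generated by finitely many vectors in `ℝ³`. -/
def coneOf {k : ℕ} (v : Fin k → (Fin 3 → ℝ)) : Set (Fin 3 → ℝ) :=
  {x | ∃ c : Fin k → ℝ, (∀ i, 0 ≤ c i) ∧ x = ∑ i, c i • v i}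

/-- `F` is a face of the cone `σ`. -/
def IsFaceOf (F σ : Set (Fin 3 → ℝ)) : Prop :=
  F ⊆ σ ∧ (∀ x ∈ F, ∀ t : ℝ, 0 ≤ t → t • x ∈ F) ∧
    (∀ x ∈ F, ∀ y ∈ F, x + y ∈ F) ∧
    ∀ x ∈ σ, ∀ y ∈ σ, x + y ∈ F → x ∈ F ∧ y ∈ F

/-- The ray spanned by a vector. -/
def ray (v : Fin 3 → ℝ) : Set (Fin 3 → ℝ) := {x | ∃ t : ℝ, 0 ≤ t ∧ x = t • v}

/-- An extremal ray of `σ`: a one-dimensional face. -/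
def IsExtremalRay (σ R : Set (Fin 3 → ℝ)) : Prop :=
  IsFaceOf R σ ∧ ∃ v, v ≠ 0 ∧ R = ray v

/-- A cone is simplicial if it is generated by linearly independent vectors. -/
def IsSimplicial (σ : Set (Fin 3 → ℝ)) : Prop :=
  ∃ (k : ℕ) (v : Fin k → (Fin 3 → ℝ)), LinearIndependent ℝ v ∧ σ = coneOf v

noncomputable def e1 : Fin 3 → ℝ := ![1,0,0]
noncomputable def e2 : Fin 3 → ℝ := ![0,1,0]
noncomputable def e3 : Fin 3 → ℝ := ![0,0,1]
noncomputable def e4 : Fin 3 → ℝ := ![1,1,-1]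
noncomputable def f1 : Fin 3 → ℝ := ![3,1,-2]
noncomputable def f2 : Fin 3 → ℝ := ![-1,1,2]

/-!
Each of the two cones is cut out along each generator `v` by a linear functional that vanishes
at `v` and is positive at the three other generators. Hence every generator spans an exposed,
in particular extremal, ray, and these four rays are distinct. Conversely, writing a nonzero
vector of an extremal ray as a nonnegative combination of the generators, the face property puts
every summand on that ray, so the ray is spanned by a generator. A simplicial cone in `ℝ³` has
at most three generators, hence at most three extremal rays, so neither cone is simplicial.
-/

open Function

section Rays

variable {v x y : Fin 3 → ℝ}

theorem mem_ray_self (v : Fin 3 → ℝ) : v ∈ ray v := ⟨1, zero_le_one, (one_smul ℝ v).symm⟩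

theorem add_mem_ray (hx : x ∈ ray v) (hy : y ∈ ray v) : x + y ∈ ray v := by
  obtain ⟨s, hs, rfl⟩ := hx
  obtain ⟨t, ht, rfl⟩ := hy
  exact ⟨s + t, add_nonneg hs ht, (add_smul s t v).symm⟩

theorem smul_mem_ray {t : ℝ} (ht : 0 ≤ t) (hx : x ∈ ray v) : t • x ∈ ray v := by
  obtain ⟨s, hs, rfl⟩ := hx
  exact ⟨t * s, mul_nonneg ht hs, smul_smul t s v⟩

theorem ray_smul_of_pos {r : ℝ} (hr : 0 < r) (v : Fin 3 → ℝ) : ray (r • v) = ray v := by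
  ext x
  constructor
  · rintro ⟨t, ht, rfl⟩
    exact ⟨t * r, mul_nonneg ht hr.le, smul_smul t r v⟩
  · rintro ⟨t, ht, rfl⟩
    refine ⟨t / r, div_nonneg ht hr.le, ?_⟩
    rw [smul_smul, div_mul_cancel₀ _ hr.ne']

end Rays

section Cones

variable {k : ℕ} {g : Fin k → Fin 3 → ℝ}

theorem sum_smul_mem_coneOf (g : Fin k → Fin 3 → ℝ) (s : Finset (Fin k)) {c : Fin k → ℝ}
    (hc : ∀ i ∈ s, 0 ≤ c i) : ∑ i ∈ s, c i • g i ∈ coneOf g := by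
  refine ⟨fun i => if i ∈ s then c i else 0, fun i => ?_, ?_⟩
  · dsimp only
    split_ifs with hi
    exacts [hc i hi, le_rfl]
  · simp [ite_smul, Finset.sum_ite_mem]

theorem ray_subset_coneOf (g : Fin k → Fin 3 → ℝ) (i : Fin k) : ray (g i) ⊆ coneOf g := by
  rintro x ⟨t, ht, rfl⟩
  simpa using sum_smul_mem_coneOf g {i} (c := fun _ => t) (by simpa using ht)

theorem dotProduct_nonneg_of_mem_coneOf {n x : Fin 3 → ℝ} (hn : ∀ i, 0 ≤ n ⬝ᵥ g i)
    (hx : x ∈ coneOf g) : 0 ≤ n ⬝ᵥ x := by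
  obtain ⟨c, hc, rfl⟩ := hx
  rw [dotProduct_sum]
  exact Finset.sum_nonneg fun i _ => by
    rw [dotProduct_smul, smul_eq_mul]
    exact mul_nonneg (hc i) (hn i)

theorem exists_eq_ray_of_isExtremalRay {R : Set (Fin 3 → ℝ)} (hR : IsExtremalRay (coneOf g) R) :
    ∃ i, R = ray (g i) := by
  obtain ⟨⟨hsub, -, -, hsplit⟩, w, hw, rfl⟩ := hR
  obtain ⟨c, hc, hwc⟩ := hsub (mem_ray_self w)
  have hterm : ∀ i, c i • g i ∈ ray w := by
    intro i
    have hgi := sum_smul_mem_coneOf g {i} fun j _ => hc j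
    have hrest := sum_smul_mem_coneOf g (Finset.univ.erase i) fun j _ => hc j
    rw [Finset.sum_singleton] at hgi
    refine (hsplit _ hgi _ hrest ?_).1
    rw [Finset.add_sum_erase _ (fun j => c j • g j) (Finset.mem_univ i), ← hwc]
    exact mem_ray_self w
  obtain ⟨i, -, hi⟩ := Finset.exists_ne_zero_of_sum_ne_zero (hwc ▸ hw : ∑ i, c i • g i ≠ 0)
  obtain ⟨t, ht, hti⟩ := hterm i
  have hci : c i ≠ 0 := fun h => hi (by simp [h])
  have ht0 : t ≠ 0 := fun h => hi (by simp [hti, h])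
  refine ⟨i, ?_⟩
  have hgi : g i = (t / c i) • w := by
    rw [div_eq_inv_mul, ← smul_smul, ← hti, smul_smul, inv_mul_cancel₀ hci, one_smul]
  rw [hgi, ray_smul_of_pos (div_pos (ht.lt_of_ne' ht0) ((hc i).lt_of_ne' hci))]

theorem mem_ray_of_dotProduct_eq_zero {n x : Fin 3 → ℝ} {i₀ : Fin k}
    (hpos : ∀ i, i ≠ i₀ → 0 < n ⬝ᵥ g i) (h₀ : n ⬝ᵥ g i₀ = 0) (hx : x ∈ coneOf g)
    (hnx : n ⬝ᵥ x = 0) : x ∈ ray (g i₀) := by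
  obtain ⟨c, hc, rfl⟩ := hx
  have hnonneg : ∀ i, 0 ≤ c i * (n ⬝ᵥ g i) := fun i =>
    mul_nonneg (hc i) (if h : i = i₀ then (h ▸ h₀).ge else (hpos i h).le)
  simp only [dotProduct_sum, dotProduct_smul, smul_eq_mul] at hnx
  have hterm := (Finset.sum_eq_zero_iff_of_nonneg fun i _ => hnonneg i).mp hnx
  have hc0 : ∀ i, i ≠ i₀ → c i = 0 := fun i hi =>
    (mul_eq_zero.mp (hterm i (Finset.mem_univ i))).resolve_right (hpos i hi).ne'
  exact ⟨c i₀, hc i₀, Finset.sum_eq_single i₀ (fun i _ hi => by simp [hc0 i hi]) (by simp)⟩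

theorem isExtremalRay_ray_of_exposed {n : Fin 3 → ℝ} {i₀ : Fin k} (hg : g i₀ ≠ 0)
    (hpos : ∀ i, i ≠ i₀ → 0 < n ⬝ᵥ g i) (h₀ : n ⬝ᵥ g i₀ = 0) :
    IsExtremalRay (coneOf g) (ray (g i₀)) := by
  have hnonneg : ∀ i, 0 ≤ n ⬝ᵥ g i := fun i =>
    if h : i = i₀ then (h ▸ h₀).ge else (hpos i h).le
  refine ⟨⟨ray_subset_coneOf g i₀, fun x hx t ht => smul_mem_ray ht hx,
    fun x hx y hy => add_mem_ray hx hy, ?_⟩, g i₀, hg, rfl⟩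
  rintro x hx y hy ⟨t, -, hxy⟩
  have hsum : n ⬝ᵥ x + n ⬝ᵥ y = 0 := by
    rw [← dotProduct_add, hxy, dotProduct_smul, h₀, smul_zero]
  have hx0 := dotProduct_nonneg_of_mem_coneOf hnonneg hx
  have hy0 := dotProduct_nonneg_of_mem_coneOf hnonneg hy
  exact ⟨mem_ray_of_dotProduct_eq_zero hpos h₀ hx (by linarith),
    mem_ray_of_dotProduct_eq_zero hpos h₀ hy (by linarith)⟩

end Cones

theorem IsSimplicial.le_three_of_injective {σ : Set (Fin 3 → ℝ)} (hσ : IsSimplicial σ) {m : ℕ}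
    {ρ : Fin m → Set (Fin 3 → ℝ)} (hρ : ∀ j, IsExtremalRay σ (ρ j)) (hinj : Injective ρ) :
    m ≤ 3 := by
  obtain ⟨k, w, hw, rfl⟩ := hσ
  choose φ hφ using fun j => exists_eq_ray_of_isExtremalRay (hρ j)
  have hφinj : Injective φ := fun j j' h => hinj (by rw [hφ j, hφ j', h])
  calc m = Fintype.card (Fin m) := (Fintype.card_fin m).symm
    _ ≤ Fintype.card (Fin k) := Fintype.card_le_of_injective φ hφinj
    _ ≤ Module.finrank ℝ (Fin 3 → ℝ) := hw.fintype_card_le_finrank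
    _ = 3 := Module.finrank_fin_fun ℝ

def ExposesGenerators {k : ℕ} (N g : Fin k → Fin 3 → ℝ) : Prop :=
  ∀ i j, if i = j then N i ⬝ᵥ g j = 0 else 0 < N i ⬝ᵥ g j

namespace ExposesGenerators

variable {k : ℕ} {N g : Fin k → Fin 3 → ℝ}

theorem dotProduct_self (h : ExposesGenerators N g) (i : Fin k) : N i ⬝ᵥ g i = 0 := by
  simpa using h i i

theorem dotProduct_pos (h : ExposesGenerators N g) {i j : Fin k} (hij : i ≠ j) :
    0 < N i ⬝ᵥ g j := by
  simpa [hij] using h i j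

theorem ne_zero [Nontrivial (Fin k)] (h : ExposesGenerators N g) (i : Fin k) : g i ≠ 0 := by
  obtain ⟨j, hj⟩ := exists_ne i
  intro hg
  simpa [hg] using h.dotProduct_pos hj

theorem isExtremalRay [Nontrivial (Fin k)] (h : ExposesGenerators N g) (i : Fin k) :
    IsExtremalRay (coneOf g) (ray (g i)) :=
  isExtremalRay_ray_of_exposed (h.ne_zero i) (fun _ hj => h.dotProduct_pos hj.symm)
    (h.dotProduct_self i)

theorem injective_ray (h : ExposesGenerators N g) : Injective fun i => ray (g i) := by
  intro i j (hij : ray (g i) = ray (g j))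
  by_contra hne
  obtain ⟨t, -, hgj⟩ : g j ∈ ray (g i) := hij ▸ mem_ray_self (g j)
  have := h.dotProduct_pos hne
  rw [hgj, dotProduct_smul, h.dotProduct_self, smul_zero] at this
  exact this.false

theorem extremalRays_eq_range [Nontrivial (Fin k)] (h : ExposesGenerators N g) :
    {R | IsExtremalRay (coneOf g) R} = Set.range fun i => ray (g i) := by
  ext R
  constructor
  · intro hR
    obtain ⟨i, rfl⟩ := exists_eq_ray_of_isExtremalRay hR
    exact ⟨i, rfl⟩
  · rintro ⟨i, rfl⟩
    exact h.isExtremalRay i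

theorem not_isSimplicial (h : ExposesGenerators N g) (hk : 3 < k) :
    ¬ IsSimplicial (coneOf g) := by
  have : Nontrivial (Fin k) := Fin.nontrivial_iff_two_le.mpr (by omega)
  intro hσ
  have := hσ.le_three_of_injective h.isExtremalRay h.injective_ray
  omega

end ExposesGenerators

theorem exposesGenerators_e1_e3_f1_f2 :
    ExposesGenerators ![![0, 3, 1], ![1, 2, 0], ![1, 1, 2], ![2, 0, 1]] ![e1, e3, f1, f2] := by
  intro i j
  fin_cases i <;> fin_cases j <;>
    norm_num [e1, e3, f1, f2, dotProduct, Fin.sum_univ_three, Matrix.cons_val_two]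

theorem exposesGenerators_e2_e4_f1_f2 :
    ExposesGenerators ![![3, 0, 2], ![2, 1, 3], ![0, 2, 1], ![1, 1, 0]] ![e2, e4, f1, f2] := by
  intro i j
  fin_cases i <;> fin_cases j <;>
    norm_num [e2, e4, f1, f2, dotProduct, Fin.sum_univ_three, Matrix.cons_val_two]

/-- neither maximal cone of `Δ_a` is simplicial, and each has
exactly four extremal rays, spanned by its four listed generators. -/
theorem stmt15 :
    ¬ IsSimplicial (coneOf ![e1, e3, f1, f2]) ∧
    ¬ IsSimplicial (coneOf ![e2, e4, f1, f2]) ∧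
    {R | IsExtremalRay (coneOf ![e1, e3, f1, f2]) R} =
      {ray e1, ray e3, ray f1, ray f2} ∧
    List.Pairwise Ne [ray e1, ray e3, ray f1, ray f2] ∧
    {R | IsExtremalRay (coneOf ![e2, e4, f1, f2]) R} =
      {ray e2, ray e4, ray f1, ray f2} ∧
    List.Pairwise Ne [ray e2, ray e4, ray f1, ray f2] := by
  have hA := exposesGenerators_e1_e3_f1_f2
  have hB := exposesGenerators_e2_e4_f1_f2
  refine ⟨hA.not_isSimplicial (by norm_num), hB.not_isSimplicial (by norm_num), ?_, ?_, ?_, ?_⟩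
  · rw [hA.extremalRays_eq_range]
    ext R
    simp [Fin.exists_fin_succ, eq_comm]
  · simpa using List.nodup_ofFn.mpr hA.injective_ray
  · rw [hB.extremalRays_eq_range]
    ext R
    simp [Fin.exists_fin_succ, eq_comm]
  · simpa using List.nodup_ofFn.mpr hB.injective_ray
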